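/- arXiv:0902.0448 — 4 statements merged into one kernel-verified Lean document; each statement's English description precedes it below -/
import Mathlib

section
/- Let δ > 0, let s be a permutation of {1,…,g}, and let r, r′ be integers with 1 ≤ r′ ≤ g+1, r ∈ {r′−1, r′} and 0 ≤ r ≤ g. Set m = 𝕀_{s(1)} + ⋯ + 𝕀_{s(r)} (with m = 0 if r = 0). If Z ∈ D_m (fundamental region for K), then Z − δ r′ e_1 ∈ D̃_m (fundamental region for K̃ = K + δJ). -/
open Matrix Finset

noncomputable section

namespace TropToda

variable (g : ℕ)

/-- The summand `(1/2) m K mᵀ + m Zᵀ` in the definition of the tropical theta function. -/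
def thetaTerm (K : Matrix (Fin g) (Fin g) ℝ) (m : Fin g → ℤ) (Z : Fin g → ℝ) : ℝ :=
  (1/2) * (Matrix.vecMul (fun i => (m i : ℝ)) K ⬝ᵥ fun i => (m i : ℝ))
    + (fun i => (m i : ℝ)) ⬝ᵥ Z

/-- The tropical Riemann theta function associated with `K`. -/
def theta (K : Matrix (Fin g) (Fin g) ℝ) (Z : Fin g → ℝ) : ℝ :=
  sInf (Set.range fun m : Fin g → ℤ => thetaTerm g K m Z)

/-- The fundamental region `D_m`. -/
def Dset (K : Matrix (Fin g) (Fin g) ℝ) (m : Fin g → ℤ) : Set (Fin g → ℝ) :=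
  {Z | theta g K Z = thetaTerm g K m Z}

/-- The generic condition on `C = (C_{-1}, C_0, …, C_g)`. -/
def Generic (C : ℤ → ℝ) : Prop :=
  C (-1) > 2 * C 0 ∧
  (∀ i : ℤ, 0 ≤ i → i ≤ (g : ℤ) - 2 → C i + C (i + 2) > 2 * C (i + 1)) ∧
  C ((g : ℤ) - 1) > 2 * C (g : ℤ)

/-- `L = C_{-1} − 2(g+1) C_g`. -/
def Lc (C : ℤ → ℝ) : ℝ := C (-1) - 2 * (g + 1) * C (g : ℤ)

/-- `λ_0 = C_g`, `λ_i = C_{g−i} − C_{g−i+1}` for `1 ≤ i ≤ g`. -/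
def lam (C : ℤ → ℝ) (i : ℕ) : ℝ :=
  if i = 0 then C (g : ℤ) else C ((g : ℤ) - i) - C ((g : ℤ) - i + 1)

/-- `p_0 = L`, `p_i = L − 2 ∑_{j=1}^g min(λ_i − λ_0, λ_j − λ_0)`. -/
def pc (C : ℤ → ℝ) (i : ℕ) : ℝ :=
  if i = 0 then Lc g C
  else Lc g C - 2 * ∑ j ∈ Finset.Icc 1 g,
    min (lam g C i - lam g C 0) (lam g C j - lam g C 0)

/-- The tridiagonal period matrix `K` (0-based index `a` corresponds to the paper's `a+1`). -/
def Kmat (C : ℤ → ℝ) : Matrix (Fin g) (Fin g) ℝ := fun a b =>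
  if a = b then
    pc g C (a : ℕ) + pc g C ((a : ℕ) + 1) + 2 * (lam g C ((a : ℕ) + 1) - lam g C (a : ℕ))
  else if (a : ℕ) + 1 = (b : ℕ) then -(pc g C ((a : ℕ) + 1))
  else if (b : ℕ) + 1 = (a : ℕ) then -(pc g C ((b : ℕ) + 1))
  else 0

/-- The first standard basis (row) vector `e_1`. -/
def e1 : Fin g → ℝ := fun i => if (i : ℕ) = 0 then 1 else 0

/-- `λ⃗ = (λ_1 − λ_0, …, λ_g − λ_{g−1})`. -/
def lamvec (C : ℤ → ℝ) : Fin g → ℝ := fun i => lam g C ((i : ℕ) + 1) - lam g C (i : ℕ)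

/-- `Z_n^t = Z_0 − nL e_1 + t λ⃗`. -/
def Zpt (C : ℤ → ℝ) (Z0 : Fin g → ℝ) (n t : ℤ) : Fin g → ℝ :=
  fun i => Z0 i - (n : ℝ) * Lc g C * e1 g i + (t : ℝ) * lamvec g C i

/-- `T_n^t = Θ(Z_n^t)`. -/
def Tf (C : ℤ → ℝ) (Z0 : Fin g → ℝ) (n t : ℤ) : ℝ :=
  theta g (Kmat g C) (Zpt g C Z0 n t)

/-- `Q_n^t = T_{n−1}^t + T_n^{t+1} − T_{n−1}^{t+1} − T_n^t + C_g`. -/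
def Qf (C : ℤ → ℝ) (Z0 : Fin g → ℝ) (n t : ℤ) : ℝ :=
  Tf g C Z0 (n - 1) t + Tf g C Z0 n (t + 1) - Tf g C Z0 (n - 1) (t + 1)
    - Tf g C Z0 n t + C (g : ℤ)

/-- `W_n^t = L + T_{n−1}^{t+1} + T_{n+1}^t − T_n^t − T_n^{t+1} + C_g`. -/
def Wf (C : ℤ → ℝ) (Z0 : Fin g → ℝ) (n t : ℤ) : ℝ :=
  Lc g C + Tf g C Z0 (n - 1) (t + 1) + Tf g C Z0 (n + 1) t - Tf g C Z0 n t
    - Tf g C Z0 n (t + 1) + C (g : ℤ)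

/-- `σ_t ∘ ι_t : ℝ^g → ℝ^{2(g+1)}`, recording `(Q_n^t, W_n^t)_{n ∈ ℤ/(g+1)ℤ}`. -/
def sigmaIota (C : ℤ → ℝ) (t : ℤ) (Z0 : Fin g → ℝ) :
    (ZMod (g + 1) → ℝ) × (ZMod (g + 1) → ℝ) :=
  (fun n => Qf g C Z0 (n.val : ℤ) t, fun n => Wf g C Z0 (n.val : ℤ) t)

/-- The tridiagonal matrix `J` with `2` on the diagonal and `−1` off it. -/
def Jmat : Matrix (Fin g) (Fin g) ℝ := fun a b =>
  if a = b then 2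
  else if (a : ℕ) + 1 = (b : ℕ) then -1
  else if (b : ℕ) + 1 = (a : ℕ) then -1
  else 0

/-- `X_n = min_{k=0,…,g} ∑_{l=1}^k (W_{n−l} − Q_{n−l})`, indices mod `g+1`. -/
def todaX (Q W : ZMod (g + 1) → ℝ) (n : ZMod (g + 1)) : ℝ :=
  ⨅ k : Fin (g + 1), ∑ l ∈ Finset.Icc 1 (k : ℕ),
    (W (n - (l : ZMod (g + 1))) - Q (n - (l : ZMod (g + 1))))

/-- The ultra-discrete periodic Toda evolution map. -/
def todaMap (QW : (ZMod (g + 1) → ℝ) × (ZMod (g + 1) → ℝ)) :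
    (ZMod (g + 1) → ℝ) × (ZMod (g + 1) → ℝ) :=
  (fun n => min (QW.2 n) (QW.1 n - todaX g QW.1 QW.2 n),
   fun n => QW.1 (n + 1) + QW.2 n - min (QW.2 n) (QW.1 n - todaX g QW.1 QW.2 n))

/-- `Z̃_n^t = Z_{n_0}^0 − (n − n_0)(L + δ) e_1 + t λ⃗`. -/
def Ztil (C : ℤ → ℝ) (Z0 : Fin g → ℝ) (n0 : ℤ) (δ : ℝ) (n t : ℤ) : Fin g → ℝ :=
  fun i => Zpt g C Z0 n0 0 i - ((n : ℝ) - (n0 : ℝ)) * (Lc g C + δ) * e1 g i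
    + (t : ℝ) * lamvec g C i

/-- The theta function `Θ̃` associated with `K̃ = K + δJ`. -/
def thetaTil (C : ℤ → ℝ) (δ : ℝ) (Z : Fin g → ℝ) : ℝ :=
  theta g (Kmat g C + δ • Jmat g) Z

/-- `Q̃_n`. -/
def Qtil (C : ℤ → ℝ) (Z0 : Fin g → ℝ) (n0 : ℤ) (δ : ℝ) (n : ℤ) : ℝ :=
  thetaTil g C δ (Ztil g C Z0 n0 δ (n - 1) 0) + thetaTil g C δ (Ztil g C Z0 n0 δ n 1)
    - thetaTil g C δ (Ztil g C Z0 n0 δ (n - 1) 1) - thetaTil g C δ (Ztil g C Z0 n0 δ n 0)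

/-- `W̃_n`. -/
def Wtil (C : ℤ → ℝ) (Z0 : Fin g → ℝ) (n0 : ℤ) (δ : ℝ) (n : ℤ) : ℝ :=
  (Lc g C + δ) + thetaTil g C δ (Ztil g C Z0 n0 δ (n - 1) 1)
    + thetaTil g C δ (Ztil g C Z0 n0 δ (n + 1) 0)
    - thetaTil g C δ (Ztil g C Z0 n0 δ n 0) - thetaTil g C δ (Ztil g C Z0 n0 δ n 1)

end TropToda

/-!
Put `Z' = Z - δ r' e₁`. For every `n ∈ ℤ^g` the term of `Θ̃(Z')` indexed by `n` is the term of
`Θ(Z)` indexed by `n` plus `(δ/2) E(n)`, where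
`E(n) = n J nᵀ - 2 r' n₁ = n₁² + ∑ₖ (nₖ - nₖ₊₁)² - 2 r' n₁` (with `n_{g+1} = 0`).
The first part is minimal at `n = m` because `Z ∈ D_m`; genericity makes `K` positive definite,
so `Θ` really is a minimum. For integer vectors `∑ₖ (nₖ - nₖ₊₁)² ≥ ∑ₖ (nₖ - nₖ₊₁) = n₁`, hence
`E(n) ≥ (n₁ - r')(n₁ - r' + 1) + r' - r'² ≥ r' - r'²`. For the staircase `m` the differences
`mₖ - mₖ₊₁` are `0` or `1` (`s` is injective) and `m₁ = r ∈ {r' - 1, r'}`, so `m` attains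
this bound.
-/

namespace TropToda

section ExtendZero

variable {M : Type*} [Zero M] {g : ℕ}

/-- `extendZero x k` is the paper's `x_{k+1}`; it vanishes from `k = g` on. -/
def extendZero (x : Fin g → M) (k : ℕ) : M := if h : k < g then x ⟨k, h⟩ else 0

@[simp] theorem extendZero_val (x : Fin g → M) (i : Fin g) : extendZero x i = x i := by
  simp [extendZero]

theorem extendZero_of_le (x : Fin g → M) {k : ℕ} (hk : g ≤ k) : extendZero x k = 0 := by
  simp [extendZero, Nat.not_lt.2 hk]

@[simp] theorem extendZero_intCast {R : Type*} [Ring R] (v : Fin g → ℤ) (k : ℕ) :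
    extendZero (fun i => (v i : R)) k = extendZero v k := by
  unfold extendZero
  split_ifs <;> simp

end ExtendZero

section PathMatrix

variable {R : Type*} [CommRing R] {g : ℕ}

variable (g) in
def pathMatrix (p q : ℕ → R) : Matrix (Fin g) (Fin g) R := fun a b =>
  if a = b then p a + p (a + 1) + q a
  else if (a : ℕ) + 1 = b then -p (a + 1)
  else if (b : ℕ) + 1 = a then -p (b + 1)
  else 0

theorem pathMatrix_apply (p q : ℕ → R) (a b : Fin g) :
    pathMatrix g p q a b =
      (if (a : ℕ) = b then p a + p (a + 1) + q a else 0)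
        + (if (a : ℕ) + 1 = b then -p b else 0)
        + (if (b : ℕ) + 1 = a then -p a else 0) := by
  simp only [pathMatrix, Fin.ext_iff]
  split_ifs <;> grind

theorem sum_range_ite_succ_eq (f : ℕ → R) (x : Fin g → R) (a : ℕ) :
    ∑ b ∈ range g, (if a + 1 = b then f b * extendZero x b else 0) =
      f (a + 1) * extendZero x (a + 1) := by
  rw [sum_ite_eq]
  split_ifs with h
  · rfl
  · rw [extendZero_of_le x (by simpa using h), mul_zero]

theorem vecMul_pathMatrix_dotProduct (p q : ℕ → R) (x : Fin g → R) :
    vecMul x (pathMatrix g p q) ⬝ᵥ x =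
      p 0 * extendZero x 0 ^ 2
        + ∑ k ∈ range g, p (k + 1) * (extendZero x k - extendZero x (k + 1)) ^ 2
        + ∑ k ∈ range g, q k * extendZero x k ^ 2 := by
  set y := extendZero x
  have hsum : vecMul x (pathMatrix g p q) ⬝ᵥ x =
      ∑ a ∈ range g, ∑ b ∈ range g, (if a = b then (p a + p (a + 1) + q a) * y a * y b else 0)
        + ∑ a ∈ range g, ∑ b ∈ range g, (if a + 1 = b then -p b * y a * y b else 0)
        + ∑ a ∈ range g, ∑ b ∈ range g, (if b + 1 = a then -p a * y a * y b else 0) := by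
    simp only [← sum_add_distrib, dotProduct, vecMul, sum_mul, ← Fin.sum_univ_eq_sum_range]
    rw [sum_comm]
    refine sum_congr rfl fun a _ => sum_congr rfl fun b _ => ?_
    simp only [pathMatrix_apply, y, extendZero_val]
    split_ifs <;> ring
  have hsymm : ∑ a ∈ range g, ∑ b ∈ range g, (if b + 1 = a then -p a * y a * y b else 0) =
      ∑ a ∈ range g, ∑ b ∈ range g, (if a + 1 = b then -p b * y a * y b else 0) := by
    rw [sum_comm]
    exact sum_congr rfl fun a _ => sum_congr rfl fun b _ => by split_ifs <;> ring
  have hdiag : ∑ a ∈ range g, ∑ b ∈ range g,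
      (if a = b then (p a + p (a + 1) + q a) * y a * y b else 0) =
        ∑ a ∈ range g, (p a + p (a + 1) + q a) * y a ^ 2 :=
    sum_congr rfl fun a ha => by rw [sum_ite_eq, if_pos ha]; ring
  have hoff : ∑ a ∈ range g, ∑ b ∈ range g, (if a + 1 = b then -p b * y a * y b else 0) =
      ∑ a ∈ range g, -p (a + 1) * y a * y (a + 1) :=
    sum_congr rfl fun a _ => sum_range_ite_succ_eq (fun b => -p b * y a) x a
  have hshift : p 0 * y 0 ^ 2 =
      ∑ k ∈ range g, p k * y k ^ 2 - ∑ k ∈ range g, p (k + 1) * y (k + 1) ^ 2 := by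
    have := sum_range_succ' (fun k => p k * y k ^ 2) g
    rw [sum_range_succ, show y g = 0 from extendZero_of_le x le_rfl] at this
    linear_combination -this
  rw [hsum, hsymm, hdiag, hoff, hshift]
  simp only [← sum_add_distrib, ← sum_sub_distrib]
  exact sum_congr rfl fun k _ => by ring

end PathMatrix

section Theta

variable {g : ℕ} {K : Matrix (Fin g) (Fin g) ℝ} {m : Fin g → ℤ} {Z : Fin g → ℝ}

theorem thetaTerm_le_of_mem_Dset (hK : BddBelow (Set.range fun n => thetaTerm g K n Z))
    (hZ : Z ∈ Dset g K m) (n : Fin g → ℤ) : thetaTerm g K m Z ≤ thetaTerm g K n Z :=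
  (Eq.symm hZ).trans_le (csInf_le hK ⟨n, rfl⟩)

theorem mem_Dset_of_forall_le (h : ∀ n, thetaTerm g K m Z ≤ thetaTerm g K n Z) :
    Z ∈ Dset g K m :=
  IsLeast.csInf_eq ⟨⟨m, rfl⟩, by rintro _ ⟨n, rfl⟩; exact h n⟩

theorem neg_sq_div_le_mul_sq_add_mul {c : ℝ} (hc : 0 < c) (x z : ℝ) :
    -(z ^ 2 / (4 * c)) ≤ c * x ^ 2 + x * z := by
  have hsq : c * x ^ 2 + x * z + z ^ 2 / (4 * c) = (2 * c * x + z) ^ 2 / (4 * c) := by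
    field_simp
    ring
  have : 0 ≤ (2 * c * x + z) ^ 2 / (4 * c) := by positivity
  linarith

theorem bddBelow_range_thetaTerm {c : Fin g → ℝ} (hc : ∀ i, 0 < c i)
    (hK : ∀ x, ∑ i, c i * x i ^ 2 ≤ 1 / 2 * (vecMul x K ⬝ᵥ x)) (Z : Fin g → ℝ) :
    BddBelow (Set.range fun n => thetaTerm g K n Z) := by
  refine ⟨∑ i, -(Z i ^ 2 / (4 * c i)), ?_⟩
  rintro _ ⟨n, rfl⟩
  calc ∑ i, -(Z i ^ 2 / (4 * c i))
      ≤ ∑ i, (c i * (n i : ℝ) ^ 2 + n i * Z i) :=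
        sum_le_sum fun i _ => neg_sq_div_le_mul_sq_add_mul (hc i) _ _
    _ ≤ thetaTerm g K n Z := by
        rw [sum_add_distrib, thetaTerm]
        exact add_le_add (hK _) le_rfl

end Theta

section Period

variable {g : ℕ} {C : ℤ → ℝ}

theorem lam_succ_sub_lam_pos (hC : Generic g C) {k : ℕ} (hk : k < g) :
    0 < lam g C (k + 1) - lam g C k := by
  obtain ⟨-, hmid, hlast⟩ := hC
  rcases k with _ | k
  · simp only [lam, zero_add, one_ne_zero, if_false, if_true, Nat.cast_one, sub_add_cancel]
    linarith
  · have := hmid (g - (k + 2)) (by omega) (by omega)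
    simp only [lam, Nat.add_one_ne_zero, if_false]
    push_cast
    ring_nf at this ⊢
    linarith

theorem lam_zero_le (hC : Generic g C) : ∀ {j : ℕ}, j ≤ g → lam g C 0 ≤ lam g C j
  | 0, _ => le_rfl
  | j + 1, hj => (lam_zero_le hC (by omega)).trans (sub_pos.1 (lam_succ_sub_lam_pos hC hj)).le

theorem sum_lam (C : ℤ → ℝ) : ∑ j ∈ Icc 1 g, lam g C j = C 0 - C g := by
  rcases Nat.eq_zero_or_pos g with rfl | hg
  · simp
  set F : ℕ → ℝ := fun t => C (g - t + 1)
  calc ∑ j ∈ Icc 1 g, lam g C j = ∑ j ∈ Icc 1 g, (F (j + 1) - F j) :=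
        sum_congr rfl fun j hj => by
          simp only [lam, F, Nat.one_le_iff_ne_zero.1 (mem_Icc.1 hj).1, if_false]
          push_cast
          ring_nf
    _ = C 0 - C g := by
        rw [sum_Icc_sub hg]
        simp only [F]
        push_cast
        ring_nf

theorem sum_lam_sub_lam_zero (C : ℤ → ℝ) :
    ∑ j ∈ Icc 1 g, (lam g C j - lam g C 0) = C 0 - (g + 1) * C g := by
  rw [sum_sub_distrib, sum_lam, sum_const, Nat.card_Icc, nsmul_eq_mul]
  simp only [lam, if_true, Nat.add_sub_cancel]
  ring

theorem pc_pos (hC : Generic g C) (i : ℕ) : 0 < pc g C i := by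
  have hsum := sum_lam_sub_lam_zero (g := g) C
  have hL : 0 < Lc g C - 2 * ∑ j ∈ Icc 1 g, (lam g C j - lam g C 0) := by
    rw [hsum, Lc]
    linarith [hC.1]
  rcases i with _ | i
  · have : 0 ≤ ∑ j ∈ Icc 1 g, (lam g C j - lam g C 0) :=
      sum_nonneg fun j hj => sub_nonneg.2 (lam_zero_le hC (mem_Icc.1 hj).2)
    simp only [pc, if_true]
    linarith
  · have : ∑ j ∈ Icc 1 g, min (lam g C (i + 1) - lam g C 0) (lam g C j - lam g C 0) ≤
        ∑ j ∈ Icc 1 g, (lam g C j - lam g C 0) :=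
      sum_le_sum fun j _ => min_le_right _ _
    simp only [pc, Nat.add_one_ne_zero, if_false]
    linarith

theorem Kmat_eq_pathMatrix (C : ℤ → ℝ) :
    Kmat g C = pathMatrix g (pc g C) (fun k => 2 * (lam g C (k + 1) - lam g C k)) :=
  rfl

theorem sum_mul_sq_le_half_vecMul_Kmat_dotProduct (hC : Generic g C) (x : Fin g → ℝ) :
    ∑ i : Fin g, (lam g C (i + 1) - lam g C i) * x i ^ 2 ≤ 1 / 2 * (vecMul x (Kmat g C) ⬝ᵥ x) := by
  have hp₀ : 0 ≤ pc g C 0 * extendZero x 0 ^ 2 := mul_nonneg (pc_pos hC 0).le (sq_nonneg _)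
  have hp : 0 ≤ ∑ k ∈ range g, pc g C (k + 1) * (extendZero x k - extendZero x (k + 1)) ^ 2 :=
    sum_nonneg fun k _ => mul_nonneg (pc_pos hC _).le (sq_nonneg _)
  have hq : ∑ k ∈ range g, 2 * (lam g C (k + 1) - lam g C k) * extendZero x k ^ 2 =
      2 * ∑ i : Fin g, (lam g C (i + 1) - lam g C i) * x i ^ 2 := by
    rw [mul_sum, ← Fin.sum_univ_eq_sum_range]
    simp only [extendZero_val, mul_assoc]
  rw [Kmat_eq_pathMatrix, vecMul_pathMatrix_dotProduct, hq]
  linarith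

theorem bddBelow_range_thetaTerm_Kmat (hC : Generic g C) (Z : Fin g → ℝ) :
    BddBelow (Set.range fun n => thetaTerm g (Kmat g C) n Z) :=
  bddBelow_range_thetaTerm (fun i => lam_succ_sub_lam_pos hC i.isLt)
    (sum_mul_sq_le_half_vecMul_Kmat_dotProduct hC) Z

end Period

def pathEnergy (n : ℕ) (c : ℤ) (a : ℕ → ℤ) : ℤ :=
  a 0 ^ 2 + ∑ k ∈ range n, (a k - a (k + 1)) ^ 2 - 2 * c * a 0

theorem sub_le_sum_sq_sub_succ (a : ℕ → ℤ) (n : ℕ) :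
    a 0 - a n ≤ ∑ k ∈ range n, (a k - a (k + 1)) ^ 2 := by
  rw [← sum_range_sub']
  exact sum_le_sum fun k _ => Int.le_self_sq _

section PathEnergy

variable {n : ℕ} {c : ℤ} {a : ℕ → ℤ}

theorem sum_sq_sub_succ_eq (h : ∀ k < n, a k - a (k + 1) = 0 ∨ a k - a (k + 1) = 1) :
    ∑ k ∈ range n, (a k - a (k + 1)) ^ 2 = a 0 - a n := by
  rw [← sum_range_sub']
  refine sum_congr rfl fun k hk => ?_
  rcases h k (mem_range.1 hk) with h | h <;> rw [h] <;> norm_num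

theorem sub_sq_le_pathEnergy (ha : a n = 0) : c - c ^ 2 ≤ pathEnergy n c a := by
  have hsum := sub_le_sum_sq_sub_succ a n
  have hc : 0 ≤ (a 0 - c) * (a 0 - c + 1) := by
    rcases le_or_gt 0 (a 0 - c) with h | h <;> nlinarith
  unfold pathEnergy
  nlinarith

theorem pathEnergy_eq_sub_sq (ha : a n = 0)
    (h : ∀ k < n, a k - a (k + 1) = 0 ∨ a k - a (k + 1) = 1) (h0 : a 0 = c - 1 ∨ a 0 = c) :
    pathEnergy n c a = c - c ^ 2 := by
  rw [pathEnergy, sum_sq_sub_succ_eq h, ha]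
  rcases h0 with h0 | h0 <;> rw [h0] <;> ring

end PathEnergy

theorem card_filter_and_le_eq_or_eq_add_one {α : Type*} [Fintype α] (P : α → Prop)
    [DecidablePred P] {f : α → ℕ} (hf : Function.Injective f) (k : ℕ) :
    #{j | P j ∧ k ≤ f j} = #{j | P j ∧ k + 1 ≤ f j} ∨
      #{j | P j ∧ k ≤ f j} = #{j | P j ∧ k + 1 ≤ f j} + 1 := by
  have hsplit : ({j | P j ∧ k ≤ f j} : Finset α) =
      disjUnion {j | P j ∧ k + 1 ≤ f j} {j | P j ∧ f j = k}
        (disjoint_filter.2 fun j _ h h' => by omega) := by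
    ext j
    have : k ≤ f j ↔ k + 1 ≤ f j ∨ f j = k := by omega
    simp only [mem_disjUnion, mem_filter, mem_univ, true_and, this, and_or_left]
  have hk : #({j | P j ∧ f j = k} : Finset α) ≤ 1 :=
    card_le_one.2 fun i hi j hj => hf (by simp_all)
  rw [hsplit, card_disjUnion]
  omega

section Shift

variable {g : ℕ}

theorem Jmat_eq_pathMatrix : Jmat g = pathMatrix g 1 0 := by
  ext a b
  simp only [Jmat, pathMatrix]
  split_ifs <;> norm_num

theorem e1_succ (g : ℕ) : e1 (g + 1) = Pi.single 0 1 := by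
  ext i
  by_cases h : i = 0
  · subst h; simp [e1]
  · simp [e1, h, Fin.val_eq_zero_iff]

theorem dotProduct_e1 (x : Fin g → ℝ) : x ⬝ᵥ e1 g = extendZero x 0 := by
  rcases g with _ | g
  · simp [extendZero]
  · rw [e1_succ, dotProduct_single, mul_one]
    exact (extendZero_val x 0).symm

theorem vecMul_Jmat_dotProduct (x : Fin g → ℝ) :
    vecMul x (Jmat g) ⬝ᵥ x =
      extendZero x 0 ^ 2 + ∑ k ∈ range g, (extendZero x k - extendZero x (k + 1)) ^ 2 := by
  simp only [Jmat_eq_pathMatrix, vecMul_pathMatrix_dotProduct, Pi.one_apply, one_mul,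
    Pi.zero_apply, zero_mul, sum_const_zero, add_zero]

theorem thetaTerm_add_smul_Jmat (K : Matrix (Fin g) (Fin g) ℝ) (δ : ℝ) (c : ℤ)
    (v : Fin g → ℤ) (Z : Fin g → ℝ) :
    thetaTerm g (K + δ • Jmat g) v (fun i => Z i - δ * c * e1 g i) =
      thetaTerm g K v Z + δ / 2 * pathEnergy g c (extendZero v) := by
  have hshift : (fun i => Z i - δ * c * e1 g i) = Z - (δ * c) • e1 g := rfl
  simp only [thetaTerm, hshift, vecMul_add, vecMul_smul, add_dotProduct, smul_dotProduct,
    dotProduct_sub, dotProduct_smul, dotProduct_e1, vecMul_Jmat_dotProduct, pathEnergy,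
    extendZero_intCast, smul_eq_mul]
  push_cast
  ring

end Shift

theorem pathEnergy_staircase {g : ℕ} (s : Equiv.Perm (Fin g)) {r c : ℤ}
    (hr : r = c - 1 ∨ r = c) (hr0 : 0 ≤ r) (hrg : r ≤ g) :
    pathEnergy g c (extendZero fun i : Fin g =>
        ((Finset.univ.filter fun j : Fin g =>
          ((j : ℕ) : ℤ) < r ∧ (i : ℕ) ≤ ((s j : Fin g) : ℕ)).card : ℤ)) = c - c ^ 2 := by
  set a : ℕ → ℤ := fun k => #{j : Fin g | (j : ℤ) < r ∧ k ≤ (s j : ℕ)}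
  have hbot : ∀ {k}, g ≤ k → a k = 0 := fun hk => by
    simp only [a, Nat.cast_eq_zero, card_eq_zero, filter_eq_empty_iff]
    exact fun j _ h => by have := (s j).isLt; omega
  have ha : extendZero (fun i : Fin g => a i) = a := by
    funext k
    by_cases hk : k < g
    · exact extendZero_val _ ⟨k, hk⟩
    · rw [extendZero_of_le _ (not_lt.1 hk), hbot (not_lt.1 hk)]
  have ha₀ : a 0 = r := by
    have : #{j : Fin g | (j : ℤ) < r ∧ 0 ≤ (s j : ℕ)} = #{j : Fin g | (j : ℕ) < r.toNat} := by
      simp only [zero_le, and_true, Int.lt_toNat]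
    simp only [a, this, Fin.card_filter_val_lt]
    omega
  change pathEnergy g c (extendZero fun i : Fin g => a i) = _
  rw [ha]
  refine pathEnergy_eq_sub_sq (hbot le_rfl) (fun k _ => ?_) (ha₀ ▸ hr)
  have := card_filter_and_le_eq_or_eq_add_one (fun j : Fin g => (j : ℤ) < r)
    (f := fun j => (s j : ℕ)) (Fin.val_injective.comp s.injective) k
  simp only [a]
  omega

end TropToda

open TropToda in
theorem shift_mem_Dtil_general
    (g : ℕ) (C : ℤ → ℝ) (hC : Generic g C)
    (δ : ℝ) (hδ : 0 < δ) (s : Equiv.Perm (Fin g)) (r r' : ℤ)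
    (hr'1 : 1 ≤ r') (hr : r = r' - 1 ∨ r = r')
    (hrg : r ≤ (g : ℤ))
    (m : Fin g → ℤ)
    (hm : m = fun i : Fin g =>
      ((Finset.univ.filter fun j : Fin g => ((j : ℕ) : ℤ) < r ∧ (i : ℕ) ≤ ((s j : Fin g) : ℕ)).card : ℤ))
    (Z : Fin g → ℝ) (hZ : Z ∈ Dset g (Kmat g C) m) :
    (fun i => Z i - δ * (r' : ℝ) * e1 g i) ∈ Dset g (Kmat g C + δ • Jmat g) m := by
  have hEm : pathEnergy g r' (extendZero m) = r' - r' ^ 2 :=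
    hm ▸ pathEnergy_staircase s hr (by omega) hrg
  refine mem_Dset_of_forall_le fun n => ?_
  rw [thetaTerm_add_smul_Jmat, thetaTerm_add_smul_Jmat]
  have hK := thetaTerm_le_of_mem_Dset (bddBelow_range_thetaTerm_Kmat hC Z) hZ n
  have hJ : (pathEnergy g r' (extendZero m) : ℝ) ≤ pathEnergy g r' (extendZero n) := by
    exact_mod_cast hEm ▸ sub_sq_le_pathEnergy (extendZero_of_le n le_rfl)
  have := mul_le_mul_of_nonneg_left hJ (half_pos hδ).le
  linarith

open TropToda in
/-- if `Z ∈ D_m` (for `K`) with `m = 𝕀_{s(1)} + ⋯ + 𝕀_{s(r)}`,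
then `Z − δ r′ e_1 ∈ D̃_m` (for `K̃ = K + δJ`). -/
theorem shift_mem_Dtil
    (g : ℕ) (hg : 0 < g) (C : ℤ → ℝ) (hC : Generic g C)
    (δ : ℝ) (hδ : 0 < δ) (s : Equiv.Perm (Fin g)) (r r' : ℤ)
    (hr'1 : 1 ≤ r') (hr'2 : r' ≤ (g : ℤ) + 1) (hr : r = r' - 1 ∨ r = r')
    (hr0 : 0 ≤ r) (hrg : r ≤ (g : ℤ))
    (m : Fin g → ℤ)
    (hm : m = fun i : Fin g =>
      ((Finset.univ.filter fun j : Fin g => ((j : ℕ) : ℤ) < r ∧ (i : ℕ) ≤ ((s j : Fin g) : ℕ)).card : ℤ))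
    (Z : Fin g → ℝ) (hZ : Z ∈ Dset g (Kmat g C) m) :
    (fun i => Z i - δ * (r' : ℝ) * e1 g i) ∈ Dset g (Kmat g C + δ • Jmat g) m :=
  shift_mem_Dtil_general g C hC δ hδ s r r' hr'1 hr hrg m hm Z hZ
end
end

section
/- Let L, a, b, c, d ∈ ℝ with 2b − a < (g+1)L, let t ∈ ℤ, and let T_n^s ∈ ℝ (n ∈ ℤ, s ∈ {t, t+1}) satisfy the quasi-periodicity T_{n+g+1}^s = T_n^s + an + bs + c. Define Q_n^t = T_{n−1}^t + T_n^{t+1} − T_{n−1}^{t+1} − T_n^t + d and W_n^t = L + T_{n−1}^{t+1} + T_{n+1}^t − T_n^t − T_n^{t+1} + d; define X_n^t = min_{l=0,…,g}[ lL + 2T_{n−l−1}^{t+1} + T_n^t + T_{n−1}^t − 2T_{n−1}^{t+1} − T_{n−l}^t − T_{n−l−1}^t ] and T_n^{t+2} = 2T_n^{t+1} − T_n^t + X_{n+1}^t; and define Q_n^{t+1}, W_n^{t+1} from (T^{t+1}, T^{t+2}) by the same formulas with t replaced by t+1. Then: (1) T_{n+g+1}^{t+2} = T_n^{t+2} + an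 + b(t+2) + c for all n ∈ ℤ; (2) (Q_0^t,…,Q_g^t,W_0^t,…,W_g^t) ∈ 𝒯; (3) applying the evolution map T to (Q_n^t, W_n^t)_{n=0,…,g} yields exactly (Q_n^{t+1}, W_n^{t+1})_{n=0,…,g}. -/
open Matrix Finset

noncomputable section

/-!
Put `w = W - Q`. The expression minimised in `X n` is the partial sum `∑_{l=1}^k w (n - l)`, and
quasi-periodicity of `T^t`, `T^{t+1}` makes `w` periodic with period sum `(g+1)L + a - 2b > 0`.
Positivity of the period sum yields the tropical recursion `X (n+1) = min 0 (w n + X n)`, whence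
`Q^{t+1}_n = Q_n - X_n + X_{n+1} = min (W_n) (Q_n - X_n)`; together with
`Q^{t+1}_n + W^{t+1}_n = Q_{n+1} + W_n` this is the Toda evolution. Periodicity of `X` gives the
quasi-periodicity of `T^{t+2}`, and the period sum is the inequality defining `𝒯`.
-/

open Function

namespace TropToda

def windowSum (w : ℤ → ℝ) (n : ℤ) (k : ℕ) : ℝ := ∑ l ∈ Icc 1 k, w (n - l)

section windowSum

variable (w : ℤ → ℝ)

@[simp] lemma windowSum_zero (n : ℤ) : windowSum w n 0 = 0 := by simp [windowSum]

lemma windowSum_succ (n : ℤ) (k : ℕ) :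
    windowSum w n (k + 1) = windowSum w n k + w (n - (k + 1)) := by
  rw [windowSum, sum_Icc_succ_top (by omega)]
  push_cast
  rfl

lemma windowSum_succ_succ (n : ℤ) (k : ℕ) :
    windowSum w (n + 1) (k + 1) = w n + windowSum w n k := by
  induction k with
  | zero => simp [windowSum_succ]
  | succ k ih =>
    rw [windowSum_succ, ih, windowSum_succ]
    push_cast
    ring_nf

lemma sum_range_eq_windowSum (N : ℕ) : ∑ m ∈ range N, w m = windowSum w N N := by
  induction N with
  | zero => simp
  | succ N ih =>
    rw [sum_range_succ, ih]
    push_cast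
    rw [windowSum_succ_succ, add_comm]

lemma _root_.Function.Periodic.windowSum {c : ℤ} (hw : Periodic w c) (k : ℕ) :
    Periodic (windowSum w · k) c := fun n => by
  simp only [TropToda.windowSum, add_sub_right_comm, hw _]

theorem iInf_windowSum_succ {N : ℕ} (hpos : ∀ n, 0 < windowSum w n (N + 1)) (n : ℤ) :
    ⨅ k : Fin (N + 1), windowSum w (n + 1) k =
      min 0 (w n + ⨅ k : Fin (N + 1), windowSum w n k) := by
  have hle : ∀ m (k : Fin (N + 1)), ⨅ j : Fin (N + 1), windowSum w m j ≤ windowSum w m k :=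
    fun m k => ciInf_le (Finite.bddBelow_range _) k
  have h0 : ⨅ j : Fin (N + 1), windowSum w (n + 1) j ≤ 0 := by simpa using hle (n + 1) 0
  apply le_antisymm
  · refine le_min h0 ?_
    rw [← sub_le_iff_le_add']
    refine le_ciInf fun ⟨k, hk⟩ => ?_
    obtain hk | rfl : k < N ∨ k = N := by omega
    · have := hle (n + 1) ⟨k + 1, by omega⟩
      rw [windowSum_succ_succ] at this
      linarith
    · -- the full window `w n + windowSum w n N` is positive, so it never attains the minimum
      have := hpos (n + 1)
      rw [windowSum_succ_succ] at this
      linarith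
  · refine le_ciInf fun ⟨k, hk⟩ => ?_
    cases k with
    | zero => simp
    | succ k =>
      rw [windowSum_succ_succ]
      linarith [hle n ⟨k, by omega⟩, min_le_right 0 (w n + ⨅ j : Fin (N + 1), windowSum w n j)]

end windowSum

lemma _root_.Function.Periodic.apply_val_of_intCast_eq {f : ℤ → ℝ} {N : ℕ}
    (hf : Periodic f ((N : ℤ) + 1)) {z : ZMod (N + 1)} {j : ℤ} (hj : (j : ZMod (N + 1)) = z) :
    f z.val = f j := by
  subst hj
  rw [ZMod.val_intCast, Int.emod_def, mul_comm]
  push_cast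
  exact hf.sub_int_mul_eq _

variable (g : ℕ)

lemma todaX_comp_val {Q W : ℤ → ℝ} (hQ : Periodic Q ((g : ℤ) + 1))
    (hW : Periodic W ((g : ℤ) + 1)) (z : ZMod (g + 1)) :
    todaX g (fun z => Q z.val) (fun z => W z.val) z =
      ⨅ k : Fin (g + 1), windowSum (W - Q) z.val k := by
  refine iInf_congr fun k => sum_congr rfl fun l _ => ?_
  have hcast : (((z.val : ℤ) - l : ℤ) : ZMod (g + 1)) = z - l := by push_cast; simp
  simp only [Pi.sub_apply, hQ.apply_val_of_intCast_eq hcast, hW.apply_val_of_intCast_eq hcast]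

theorem todaMap_comp_val {Q W Q' W' : ℤ → ℝ} (hQ : Periodic Q ((g : ℤ) + 1))
    (hW : Periodic W ((g : ℤ) + 1))
    (hQ' : ∀ n, Q' n = min (W n) (Q n - ⨅ k : Fin (g + 1), windowSum (W - Q) n k))
    (hW' : ∀ n, W' n = Q (n + 1) + W n - Q' n) :
    todaMap g (fun z => Q z.val, fun z => W z.val) = (fun z => Q' z.val, fun z => W' z.val) := by
  have hcast (z : ZMod (g + 1)) : (((z.val : ℤ) + 1 : ℤ) : ZMod (g + 1)) = z + 1 := by
    push_cast; simp
  ext z <;> simp only [todaMap, todaX_comp_val g hQ hW, hQ', hW',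
    hQ.apply_val_of_intCast_eq (hcast z)]

section Bilinear

variable {g : ℕ} {L a b c d : ℝ} {t : ℤ} {Tt Tt1 Qt Wt : ℤ → ℝ}

lemma windowSum_sub_eq (hQt : ∀ n, Qt n = Tt (n - 1) + Tt1 n - Tt1 (n - 1) - Tt n + d)
    (hWt : ∀ n, Wt n = L + Tt1 (n - 1) + Tt (n + 1) - Tt n - Tt1 n + d) (n : ℤ) (k : ℕ) :
    windowSum (Wt - Qt) n k = k * L + 2 * Tt1 (n - k - 1) + Tt n + Tt (n - 1)
      - (2 * Tt1 (n - 1) + Tt (n - k) + Tt (n - k - 1)) := by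
  induction k with
  | zero => simp
  | succ k ih =>
    rw [windowSum_succ, ih, Pi.sub_apply, hWt, hQt]
    push_cast
    ring_nf

lemma periodic_Q (hpt : ∀ n : ℤ, Tt (n + g + 1) = Tt n + a * n + b * t + c)
    (hpt1 : ∀ n : ℤ, Tt1 (n + g + 1) = Tt1 n + a * n + b * (t + 1) + c)
    (hQt : ∀ n, Qt n = Tt (n - 1) + Tt1 n - Tt1 (n - 1) - Tt n + d) :
    Periodic Qt ((g : ℤ) + 1) := fun n => by
  linear_combination (norm := (push_cast; ring_nf))
    hQt (n + (g + 1)) - hQt n + hpt (n - 1) + hpt1 n - hpt1 (n - 1) - hpt n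

lemma periodic_W (hpt : ∀ n : ℤ, Tt (n + g + 1) = Tt n + a * n + b * t + c)
    (hpt1 : ∀ n : ℤ, Tt1 (n + g + 1) = Tt1 n + a * n + b * (t + 1) + c)
    (hWt : ∀ n, Wt n = L + Tt1 (n - 1) + Tt (n + 1) - Tt n - Tt1 n + d) :
    Periodic Wt ((g : ℤ) + 1) := fun n => by
  linear_combination (norm := (push_cast; ring_nf))
    hWt (n + (g + 1)) - hWt n + hpt1 (n - 1) + hpt (n + 1) - hpt n - hpt1 n

lemma windowSum_sub_period (hpt : ∀ n : ℤ, Tt (n + g + 1) = Tt n + a * n + b * t + c)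
    (hpt1 : ∀ n : ℤ, Tt1 (n + g + 1) = Tt1 n + a * n + b * (t + 1) + c)
    (hQt : ∀ n, Qt n = Tt (n - 1) + Tt1 n - Tt1 (n - 1) - Tt n + d)
    (hWt : ∀ n, Wt n = L + Tt1 (n - 1) + Tt (n + 1) - Tt n - Tt1 n + d) (n : ℤ) :
    windowSum (Wt - Qt) n (g + 1) = (g + 1) * L + a - 2 * b := by
  rw [windowSum_sub_eq hQt hWt]
  linear_combination (norm := (push_cast; ring_nf))
    -2 * hpt1 (n - g - 2) + hpt (n - g - 1) + hpt (n - g - 2)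

end Bilinear

end TropToda

open TropToda in
theorem bilinear_commutes_general
    (g : ℕ) (L a b c d : ℝ) (hL : 2 * b - a < (g + 1) * L)
    (t : ℤ) (Tt Tt1 : ℤ → ℝ)
    (hpt : ∀ n : ℤ, Tt (n + g + 1) = Tt n + a * n + b * t + c)
    (hpt1 : ∀ n : ℤ, Tt1 (n + g + 1) = Tt1 n + a * n + b * (t + 1) + c)
    (X : ℤ → ℝ)
    (hX : ∀ n : ℤ, X n = ⨅ l : Fin (g + 1),
        (((l : ℕ) : ℝ) * L + 2 * Tt1 (n - l - 1) + Tt n + Tt (n - 1)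
          - (2 * Tt1 (n - 1) + Tt (n - l) + Tt (n - l - 1))))
    (Tt2 : ℤ → ℝ) (hT2 : ∀ n : ℤ, Tt2 n = 2 * Tt1 n - Tt n + X (n + 1))
    (Qt Wt Qt1 Wt1 : ℤ → ℝ)
    (hQt : ∀ n : ℤ, Qt n = Tt (n - 1) + Tt1 n - Tt1 (n - 1) - Tt n + d)
    (hWt : ∀ n : ℤ, Wt n = L + Tt1 (n - 1) + Tt (n + 1) - Tt n - Tt1 n + d)
    (hQt1 : ∀ n : ℤ, Qt1 n = Tt1 (n - 1) + Tt2 n - Tt2 (n - 1) - Tt1 n + d)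
    (hWt1 : ∀ n : ℤ, Wt1 n = L + Tt2 (n - 1) + Tt1 (n + 1) - Tt1 n - Tt2 n + d) :
    (∀ n : ℤ, Tt2 (n + g + 1) = Tt2 n + a * n + b * (t + 2) + c) ∧
    (∑ n ∈ Finset.range (g + 1), Qt n < ∑ n ∈ Finset.range (g + 1), Wt n) ∧
    todaMap g (fun n : ZMod (g + 1) => Qt (n.val : ℤ), fun n : ZMod (g + 1) => Wt (n.val : ℤ))
      = (fun n : ZMod (g + 1) => Qt1 (n.val : ℤ), fun n : ZMod (g + 1) => Wt1 (n.val : ℤ)) := by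
  have hXw : ∀ n, X n = ⨅ k : Fin (g + 1), windowSum (Wt - Qt) n k := fun n => by
    rw [hX]
    exact iInf_congr fun k => (windowSum_sub_eq hQt hWt n k).symm
  have hpos : ∀ n, 0 < windowSum (Wt - Qt) n (g + 1) := fun n => by
    rw [windowSum_sub_period hpt hpt1 hQt hWt]
    linarith
  have hQper := periodic_Q hpt hpt1 hQt
  have hWper := periodic_W hpt hpt1 hWt
  have hXper : Periodic X ((g : ℤ) + 1) := fun n => by
    simp only [hXw, ((hWper.sub hQper).windowSum _ _) n]
  have hQt1_eq_min : ∀ n, Qt1 n = min (Wt n) (Qt n - X n) := fun n => by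
    have hX_succ : X (n + 1) = min 0 (Wt n - Qt n + X n) := by
      simpa only [hXw, Pi.sub_apply] using iInf_windowSum_succ _ hpos n
    have hT2_pred := hT2 (n - 1)
    rw [sub_add_cancel] at hT2_pred
    have hQt1_eq : Qt1 n = Qt n - X n + X (n + 1) := by
      linear_combination hQt1 n + hT2 n - hT2_pred - hQt n
    rw [hQt1_eq, hX_succ, ← min_add_add_left, min_comm]
    congr 1 <;> ring
  refine ⟨fun n => ?_, ?_, todaMap_comp_val g hQper hWper (fun n => by rw [hQt1_eq_min, hXw])
    fun n => by linear_combination (norm := ring_nf) hWt1 n + hQt1 n - hQt (n + 1) - hWt n⟩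
  · linear_combination (norm := (push_cast; ring_nf))
      hT2 (n + g + 1) - hT2 n + 2 * hpt1 n - hpt n + hXper (n + 1)
  · have hsum := sum_range_eq_windowSum (Wt - Qt) (g + 1)
    simp only [Pi.sub_apply, sum_sub_distrib] at hsum
    linarith [hpos (g + 1 : ℕ)]

open TropToda in
/-- the bilinear formalism: quasi-periodicity of `T^{t+2}`, membership
of `(Q^t, W^t)` in `𝒯`, and commutativity with the Toda evolution map. -/
theorem bilinear_commutes
    (g : ℕ) (hg : 0 < g) (L a b c d : ℝ) (hL : 2 * b - a < (g + 1) * L)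
    (t : ℤ) (Tt Tt1 : ℤ → ℝ)
    (hpt : ∀ n : ℤ, Tt (n + g + 1) = Tt n + a * n + b * t + c)
    (hpt1 : ∀ n : ℤ, Tt1 (n + g + 1) = Tt1 n + a * n + b * (t + 1) + c)
    (X : ℤ → ℝ)
    (hX : ∀ n : ℤ, X n = ⨅ l : Fin (g + 1),
        (((l : ℕ) : ℝ) * L + 2 * Tt1 (n - l - 1) + Tt n + Tt (n - 1)
          - (2 * Tt1 (n - 1) + Tt (n - l) + Tt (n - l - 1))))
    (Tt2 : ℤ → ℝ) (hT2 : ∀ n : ℤ, Tt2 n = 2 * Tt1 n - Tt n + X (n + 1))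
    (Qt Wt Qt1 Wt1 : ℤ → ℝ)
    (hQt : ∀ n : ℤ, Qt n = Tt (n - 1) + Tt1 n - Tt1 (n - 1) - Tt n + d)
    (hWt : ∀ n : ℤ, Wt n = L + Tt1 (n - 1) + Tt (n + 1) - Tt n - Tt1 n + d)
    (hQt1 : ∀ n : ℤ, Qt1 n = Tt1 (n - 1) + Tt2 n - Tt2 (n - 1) - Tt1 n + d)
    (hWt1 : ∀ n : ℤ, Wt1 n = L + Tt2 (n - 1) + Tt1 (n + 1) - Tt1 n - Tt2 n + d) :
    (∀ n : ℤ, Tt2 (n + g + 1) = Tt2 n + a * n + b * (t + 2) + c) ∧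
    (∑ n ∈ Finset.range (g + 1), Qt n < ∑ n ∈ Finset.range (g + 1), Wt n) ∧
    todaMap g (fun n : ZMod (g + 1) => Qt (n.val : ℤ), fun n : ZMod (g + 1) => Wt (n.val : ℤ))
      = (fun n : ZMod (g + 1) => Qt1 (n.val : ℤ), fun n : ZMod (g + 1) => Wt1 (n.val : ℤ)) :=
  bilinear_commutes_general g L a b c d hL t Tt Tt1 hpt hpt1 X hX Tt2 hT2 Qt Wt Qt1 Wt1 hQt hWt hQt1
    hWt1
end
end

section
/- Under the generic condition, det K = (g+1) · p_0 · p_1 ⋯ p_{g−1}. -/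
open Matrix Finset

noncomputable section

/-!
Under the generic condition `λ` is increasing, so the minima defining `p` can be evaluated and
`p_k - p_{k+1} = 2 (g - k) (λ_{k+1} - λ_k)`. Thus the diagonal of `K` satisfies
`(g - k) K_{kk} = (g - k + 1) p_k + (g - k - 1) p_{k+1}`, while its off-diagonal entries are
`-p_{k+1}`. Expanding along the first row, the trailing `m × m` principal minor of such a
tridiagonal matrix is `(m + 1) p_{g-m} ⋯ p_{g-1}`, by induction on `m`.
-/

namespace Matrix

variable {R : Type*}

def tridiagonal [Zero R] (d e : ℕ → R) (n : ℕ) : Matrix (Fin n) (Fin n) R :=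
  of fun a b =>
    if a = b then d a
    else if (a : ℕ) + 1 = b then e a
    else if (b : ℕ) + 1 = a then e b
    else 0

theorem tridiagonal_submatrix_succ [Zero R] (d e : ℕ → R) (n : ℕ) :
    (tridiagonal d e (n + 1)).submatrix Fin.succ Fin.succ
      = tridiagonal (fun k => d (k + 1)) (fun k => e (k + 1)) n := by
  ext a b
  simp only [tridiagonal, submatrix_apply, of_apply, Fin.succ_inj, Fin.val_succ]
  split_ifs <;> first | rfl | omega

variable [CommRing R]

theorem det_tridiagonal_succ_succ (d e : ℕ → R) (n : ℕ) :
    (tridiagonal d e (n + 2)).det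
      = d 0 * (tridiagonal (fun k => d (k + 1)) (fun k => e (k + 1)) (n + 1)).det
        - e 0 ^ 2 * (tridiagonal (fun k => d (k + 2)) (fun k => e (k + 2)) n).det := by
  set A := tridiagonal d e (n + 2)
  have hrow : ∀ j : Fin n, A 0 j.succ.succ = 0 := fun j => by
    simp [A, tridiagonal, Fin.ext_iff]
  have hcol : ∀ i : Fin n, A i.succ.succ 0 = 0 := fun i => by
    simp [A, tridiagonal, Fin.ext_iff]
  have hminor : (A.submatrix Fin.succ (Fin.succ 0).succAbove).det
      = e 0 * (tridiagonal (fun k => d (k + 2)) (fun k => e (k + 2)) n).det := by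
    have hcols : (Fin.succ 0).succAbove ∘ Fin.succ = Fin.succ ∘ (Fin.succ : Fin n → _) := by
      ext j; simp
    rw [det_succ_column_zero, Fin.sum_univ_succ, Fin.succAbove_zero, submatrix_submatrix, hcols,
      ← submatrix_submatrix, tridiagonal_submatrix_succ, tridiagonal_submatrix_succ,
      Finset.sum_eq_zero fun i _ => by simp [hcol]]
    simp [A, tridiagonal]
  rw [det_succ_row_zero, Fin.sum_univ_succ, Fin.sum_univ_succ, Fin.succAbove_zero,
    tridiagonal_submatrix_succ, hminor, Finset.sum_eq_zero fun j _ => by simp [hrow]]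
  simp [A, tridiagonal]
  ring

theorem det_tridiagonal_eq_succ_mul_prod (n : ℕ) (d e p : ℕ → R)
    (hd : ∀ i j, i + j + 1 = n → ((j : R) + 1) * d i = (j + 2) * p i + j * p (i + 1))
    (he : ∀ k, e k ^ 2 = p (k + 1) ^ 2) :
    (tridiagonal d e n).det = (n + 1) * ∏ i ∈ range n, p i := by
  induction n using Nat.twoStepInduction generalizing d e p with
  | zero => simp
  | one => simpa [tridiagonal, one_add_one_eq_two] using hd 0 0 rfl
  | more n ih ih₁ =>
    have hd₀ := hd 0 (n + 1) (by omega)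
    push_cast at hd₀
    rw [det_tridiagonal_succ_succ,
      ih₁ _ _ (fun k => p (k + 1)) (fun i j h => hd (i + 1) j (by omega)) (fun k => he (k + 1)),
      ih _ _ (fun k => p (k + 2)) (fun i j h => hd (i + 2) j (by omega)) (fun k => he (k + 2)),
      prod_range_succ' _ (n + 1), prod_range_succ' _ n]
    push_cast
    linear_combination (p 1 * ∏ i ∈ range n, p (i + 2)) * hd₀
      - ((n : R) + 1) * (∏ i ∈ range n, p (i + 2)) * he 0

end Matrix

theorem Finset.sum_Icc_min_succ_sub_min {α : Type*} [AddCommGroup α] [LinearOrder α]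
    [IsOrderedAddMonoid α] {f : ℕ → α} {n k : ℕ} (hf : MonotoneOn f (Set.Iic n)) (hk : k < n) :
    ∑ j ∈ Icc 1 n, (min (f (k + 1)) (f j) - min (f k) (f j)) = (n - k) • (f (k + 1) - f k) := by
  have hterm : ∀ j ∈ Icc 1 n, min (f (k + 1)) (f j) - min (f k) (f j)
      = if k < j then f (k + 1) - f k else 0 := by
    intro j hj
    have hjn : j ≤ n := (mem_Icc.mp hj).2
    have hmono : ∀ {a b}, a ≤ b → b ≤ n → f a ≤ f b := fun hab hb =>
      hf (Set.mem_Iic.mpr (hab.trans hb)) (Set.mem_Iic.mpr hb) hab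
    split_ifs with hkj
    · rw [min_eq_left (hmono hkj hjn), min_eq_left (hmono (by omega) hjn)]
    · rw [min_eq_right (hmono (by omega) hk), min_eq_right (hmono (by omega) hk.le), sub_self]
  have hfilter : {j ∈ Icc 1 n | k < j} = Icc (k + 1) n := by
    ext j; simp only [mem_filter, mem_Icc]; omega
  rw [sum_congr rfl hterm, sum_ite, sum_const_zero, add_zero, sum_const, hfilter, Nat.card_Icc,
    Nat.add_sub_add_right]

namespace TropToda

variable {g : ℕ} {C : ℤ → ℝ}

theorem lam_lt_lam_succ (hC : Generic g C) {i : ℕ} (hi : i < g) :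
    lam g C i < lam g C (i + 1) := by
  obtain ⟨-, hconvex, hlast⟩ := hC
  rcases Nat.eq_zero_or_pos i with rfl | hpos
  · simp only [lam, if_true, zero_add, one_ne_zero, if_false, Nat.cast_one, sub_add_cancel]
    linarith
  · have h := hconvex ((g : ℤ) - i - 1) (by omega) (by omega)
    simp only [lam, if_neg hpos.ne', if_neg (Nat.succ_ne_zero i)]
    push_cast
    ring_nf at h ⊢
    linarith

theorem lam_monotoneOn (hC : Generic g C) : MonotoneOn (lam g C) (Set.Iic g) :=
  monotoneOn_of_le_add_one Set.ordConnected_Iic fun _ _ _ hi =>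
    (lam_lt_lam_succ hC (Nat.succ_le_iff.mp hi)).le

theorem pc_eq_sub_sum_min (hC : Generic g C) (k : ℕ) :
    pc g C k = Lc g C - 2 * ∑ j ∈ Icc 1 g, min (lam g C k - lam g C 0) (lam g C j - lam g C 0) := by
  rcases eq_or_ne k 0 with rfl | hk
  · have hzero : ∀ j ∈ Icc 1 g, min (lam g C 0 - lam g C 0) (lam g C j - lam g C 0) = 0 :=
      fun j hj => by
        rw [sub_self, min_eq_left (sub_nonneg.mpr (lam_monotoneOn hC (by simp)
          (Set.mem_Iic.mpr (mem_Icc.mp hj).2) (Nat.zero_le j)))]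
    rw [sum_congr rfl hzero, sum_const_zero, mul_zero, sub_zero, pc, if_pos rfl]
  · rw [pc, if_neg hk]

theorem pc_sub_pc_succ (hC : Generic g C) {k : ℕ} (hk : k < g) :
    pc g C k - pc g C (k + 1) = 2 * ((g : ℝ) - k) * (lam g C (k + 1) - lam g C k) := by
  have hmono : MonotoneOn (fun i => lam g C i - lam g C 0) (Set.Iic g) :=
    fun a ha b hb hab => sub_le_sub_right (lam_monotoneOn hC ha hb hab) _
  have hsum := sum_Icc_min_succ_sub_min hmono hk
  rw [sum_sub_distrib, nsmul_eq_mul, Nat.cast_sub hk.le] at hsum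
  rw [pc_eq_sub_sum_min hC k, pc_eq_sub_sum_min hC (k + 1)]
  linear_combination 2 * hsum

theorem Kmat_eq_tridiagonal : Kmat g C = tridiagonal
    (fun k => pc g C k + pc g C (k + 1) + 2 * (lam g C (k + 1) - lam g C k))
    (fun k => -pc g C (k + 1)) g :=
  rfl

end TropToda

open TropToda in
theorem det_Kmat_general
    (g : ℕ) (C : ℤ → ℝ) (hC : Generic g C) :
    (Kmat g C).det = (g + 1) * ∏ i ∈ Finset.range g, pc g C i := by
  rw [Kmat_eq_tridiagonal]
  refine det_tridiagonal_eq_succ_mul_prod g _ _ (pc g C) (fun i j hij => ?_) fun k => neg_sq _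
  have hstep := pc_sub_pc_succ hC (show i < g by omega)
  rw [show (g : ℝ) - i = j + 1 by rw [← hij]; push_cast; ring] at hstep
  linear_combination -hstep

open TropToda in
/-- `det K = (g+1) p_0 p_1 ⋯ p_{g−1}`. -/
theorem det_Kmat
    (g : ℕ) (hg : 0 < g) (C : ℤ → ℝ) (hC : Generic g C) :
    (Kmat g C).det = (g + 1) * ∏ i ∈ Finset.range g, pc g C i :=
  det_Kmat_general g C hC
end
end

section
/- For every Z ∈ ℝ^g, the infimum defining Θ(Z) is attained (in particular Θ(Z) is finite). Moreover Θ satisfies the quasi-periodicity Θ(Z + lK) = Θ(Z) − (1/2) l K lᵀ − l Zᵀ for every l ∈ ℤ^g, and Θ is even: Θ(−Z) = Θ(Z) for all Z ∈ ℝ^g. -/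
open Matrix Finset

noncomputable section

/-!
The quadratic form of a positive definite `K` grows like `‖m‖²`, so `m ↦ ½ m K mᵀ + m Zᵀ` tends
to `+∞` along the cofinite filter of `ℤ^g` and hence attains its minimum. The substitution
`m ↦ m + l` (using `Kᵀ = K`) identifies the terms at `Z + lK` with those at `Z` shifted by the
constant `-½ lKlᵀ - lZᵀ`, and `m ↦ -m` identifies the terms at `-Z` with those at `Z`.
-/

open Filter Set

theorem Matrix.abs_dotProduct_le_norm_mul_sum_abs {n : Type*} [Fintype n] (x y : n → ℝ) :
    |x ⬝ᵥ y| ≤ ‖x‖ * ∑ i, |y i| := by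
  rw [Finset.mul_sum]
  refine (Finset.abs_sum_le_sum_abs _ _).trans (Finset.sum_le_sum fun i _ => ?_)
  rw [abs_mul]
  exact mul_le_mul_of_nonneg_right (norm_le_pi_norm x i) (abs_nonneg _)

theorem Matrix.PosDef.exists_pos_mul_sq_norm_le {n : Type*} [Fintype n]
    {K : Matrix n n ℝ} (hK : K.PosDef) :
    ∃ c > 0, ∀ x : n → ℝ, c * ‖x‖ ^ 2 ≤ x ᵥ* K ⬝ᵥ x := by
  obtain ⟨c, hc, hsphere⟩ := (isCompact_sphere (0 : n → ℝ) 1).exists_forall_le'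
    (f := fun x => x ᵥ* K ⬝ᵥ x) (by fun_prop) (a := 0) fun u hu => by
      simpa [dotProduct_mulVec] using hK.dotProduct_mulVec_pos (ne_zero_of_mem_unit_sphere ⟨u, hu⟩)
  refine ⟨c, hc, fun x => ?_⟩
  rcases eq_or_ne x 0 with rfl | hx
  · simp
  have hnorm : 0 < ‖x‖ := norm_pos_iff.2 hx
  have hu : ‖x‖⁻¹ • x ∈ Metric.sphere (0 : n → ℝ) 1 := by
    simp [norm_smul, hnorm.ne']
  have hscale : x ᵥ* K ⬝ᵥ x = ‖x‖ ^ 2 * ((‖x‖⁻¹ • x) ᵥ* K ⬝ᵥ (‖x‖⁻¹ • x)) := by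
    rw [smul_vecMul, smul_dotProduct, dotProduct_smul, smul_eq_mul, smul_eq_mul]
    field_simp
  rw [hscale, mul_comm c]
  exact mul_le_mul_of_nonneg_left (hsphere _ hu) (by positivity)

theorem Matrix.PosDef.tendsto_half_quadratic_add_dotProduct_cocompact {n : Type*} [Fintype n]
    {K : Matrix n n ℝ} (hK : K.PosDef) (Z : n → ℝ) :
    Tendsto (fun x : n → ℝ => 1 / 2 * (x ᵥ* K ⬝ᵥ x) + x ⬝ᵥ Z) (cocompact _) atTop := by
  obtain ⟨c, hc, hcoer⟩ := hK.exists_pos_mul_sq_norm_le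
  set A := ∑ i, |Z i|
  have hlower (x : n → ℝ) : ‖x‖ * (c / 2 * ‖x‖ - A) ≤ 1 / 2 * (x ᵥ* K ⬝ᵥ x) + x ⬝ᵥ Z := by
    nlinarith [hcoer x, abs_dotProduct_le_norm_mul_sum_abs x Z, neg_abs_le (x ⬝ᵥ Z)]
  have hgrowth : Tendsto (fun t : ℝ => t * (c / 2 * t - A)) atTop atTop :=
    tendsto_id.atTop_mul_atTop₀ <|
      tendsto_atTop_add_const_right _ _ (tendsto_id.const_mul_atTop (by positivity))
  exact tendsto_atTop_mono hlower (hgrowth.comp tendsto_norm_cocompact_atTop)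

theorem tendsto_intCast_pi_cofinite_cocompact {ι : Type*} [Finite ι] :
    Tendsto (fun m : ι → ℤ => fun i => (m i : ℝ)) cofinite (cocompact (ι → ℝ)) := by
  simpa only [coprodᵢ_cofinite, coprodᵢ_cocompact] using
    Tendsto.pi_map_coprodᵢ fun _ : ι => Int.tendsto_coe_cofinite

namespace TropToda

variable {g : ℕ} {K : Matrix (Fin g) (Fin g) ℝ}

theorem exists_forall_thetaTerm_le (hK : K.PosDef) (Z : Fin g → ℝ) :
    ∃ m, ∀ m', thetaTerm g K m Z ≤ thetaTerm g K m' Z :=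
  ((hK.tendsto_half_quadratic_add_dotProduct_cocompact Z).comp
    tendsto_intCast_pi_cofinite_cocompact).exists_forall_le

theorem theta_eq_thetaTerm_of_forall_le {m : Fin g → ℤ} {Z : Fin g → ℝ}
    (hm : ∀ m', thetaTerm g K m Z ≤ thetaTerm g K m' Z) : theta g K Z = thetaTerm g K m Z :=
  IsLeast.csInf_eq ⟨⟨m, rfl⟩, forall_mem_range.2 hm⟩

theorem thetaTerm_add_vecMul (hK : K.IsSymm) (m l : Fin g → ℤ) (Z : Fin g → ℝ) :
    thetaTerm g K m (fun i => Z i + Matrix.vecMul (fun j => (l j : ℝ)) K i)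
      = thetaTerm g K (m + l) Z
        - (1/2) * (Matrix.vecMul (fun j => (l j : ℝ)) K ⬝ᵥ fun j => (l j : ℝ))
        - ((fun j => (l j : ℝ)) ⬝ᵥ Z) := by
  set x : Fin g → ℝ := fun i => (m i : ℝ)
  set y : Fin g → ℝ := fun i => (l i : ℝ)
  have hcast : (fun i => (((m + l) i : ℤ) : ℝ)) = x + y := by
    funext i; simp [x, y]
  have hsymm : y ᵥ* K ⬝ᵥ x = x ᵥ* K ⬝ᵥ y := by
    rw [← dotProduct_mulVec, ← vecMul_transpose, hK.eq, dotProduct_comm]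
  simp only [thetaTerm, hcast]
  change 1 / 2 * (x ᵥ* K ⬝ᵥ x) + x ⬝ᵥ (Z + y ᵥ* K) = _
  rw [add_vecMul, add_dotProduct, dotProduct_add, dotProduct_add, dotProduct_add,
    add_dotProduct, dotProduct_comm x (y ᵥ* K), hsymm]
  ring

theorem theta_add_vecMul (hsym : K.IsSymm) (hK : K.PosDef) (Z : Fin g → ℝ) (l : Fin g → ℤ) :
    theta g K (fun i => Z i + Matrix.vecMul (fun j => (l j : ℝ)) K i)
      = theta g K Z
        - (1/2) * (Matrix.vecMul (fun j => (l j : ℝ)) K ⬝ᵥ fun j => (l j : ℝ))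
        - ((fun j => (l j : ℝ)) ⬝ᵥ Z) := by
  obtain ⟨m, hm⟩ := exists_forall_thetaTerm_le hK Z
  have hm' : ∀ m', thetaTerm g K (m - l) (fun i => Z i + Matrix.vecMul (fun j => (l j : ℝ)) K i)
      ≤ thetaTerm g K m' (fun i => Z i + Matrix.vecMul (fun j => (l j : ℝ)) K i) := fun m' => by
    simpa only [thetaTerm_add_vecMul hsym, sub_add_cancel, sub_le_sub_iff_right] using hm (m' + l)
  rw [theta_eq_thetaTerm_of_forall_le hm', theta_eq_thetaTerm_of_forall_le hm,
    thetaTerm_add_vecMul hsym, sub_add_cancel]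

theorem thetaTerm_neg (m : Fin g → ℤ) (Z : Fin g → ℝ) :
    thetaTerm g K m (-Z) = thetaTerm g K (-m) Z := by
  have hcast : (fun i => (((-m) i : ℤ) : ℝ)) = -fun i => (m i : ℝ) := by
    funext i; simp
  simp only [thetaTerm, hcast, neg_vecMul, neg_dotProduct, dotProduct_neg, neg_neg]

theorem theta_neg (Z : Fin g → ℝ) :
    theta g K (-Z) = theta g K Z := by
  simp only [theta, thetaTerm_neg]
  exact congrArg sInf ((Equiv.neg _).surjective.range_comp fun m => thetaTerm g K m Z)

end TropToda

open TropToda in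
theorem theta_attained_quasiperiodic_even_general
    (g : ℕ) (K : Matrix (Fin g) (Fin g) ℝ)
    (hsym : K.IsSymm) (hpd : K.PosDef) :
    (∀ Z : Fin g → ℝ, ∃ m : Fin g → ℤ,
        theta g K Z = thetaTerm g K m Z ∧
        IsLeast (Set.range fun m' : Fin g → ℤ => thetaTerm g K m' Z)
          (thetaTerm g K m Z)) ∧
    (∀ Z : Fin g → ℝ, ∀ l : Fin g → ℤ,
        theta g K (fun i => Z i + Matrix.vecMul (fun j => (l j : ℝ)) K i)
          = theta g K Z
            - (1/2) * (Matrix.vecMul (fun j => (l j : ℝ)) K ⬝ᵥ fun j => (l j : ℝ))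
            - ((fun j => (l j : ℝ)) ⬝ᵥ Z)) ∧
    (∀ Z : Fin g → ℝ, theta g K (-Z) = theta g K Z) := by
  refine ⟨fun Z => ?_, theta_add_vecMul hsym hpd, theta_neg⟩
  obtain ⟨m, hm⟩ := exists_forall_thetaTerm_le hpd Z
  exact ⟨m, theta_eq_thetaTerm_of_forall_le hm, ⟨m, rfl⟩, forall_mem_range.2 hm⟩

open TropToda in
/-- for symmetric positive definite `K` the infimum defining `Θ` is
attained; `Θ` is quasi-periodic with respect to the lattice `ℤ^g K` and even. -/
theorem theta_attained_quasiperiodic_even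
    (g : ℕ) (hg : 0 < g) (K : Matrix (Fin g) (Fin g) ℝ)
    (hsym : K.IsSymm) (hpd : K.PosDef) :
    (∀ Z : Fin g → ℝ, ∃ m : Fin g → ℤ,
        theta g K Z = thetaTerm g K m Z ∧
        IsLeast (Set.range fun m' : Fin g → ℤ => thetaTerm g K m' Z)
          (thetaTerm g K m Z)) ∧
    (∀ Z : Fin g → ℝ, ∀ l : Fin g → ℤ,
        theta g K (fun i => Z i + Matrix.vecMul (fun j => (l j : ℝ)) K i)
          = theta g K Z
            - (1/2) * (Matrix.vecMul (fun j => (l j : ℝ)) K ⬝ᵥ fun j => (l j : ℝ))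
            - ((fun j => (l j : ℝ)) ⬝ᵥ Z)) ∧
    (∀ Z : Fin g → ℝ, theta g K (-Z) = theta g K Z) :=
  theta_attained_quasiperiodic_even_general g K hsym hpd
end
end
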